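/- For the database D of the previous context (r0 over {A,B,C} with tuples {(a,b,c1),(a,b1,c),(a1,b,c)}, r1={(a,b),(a,b1),(a1,b)}, r2={(a,c),(a,c1),(a1,c)}, r3={(b,c),(b,c1),(b1,c)}), the join r1 ⋈ r2 ⋈ r3 contains the tuple (a,b,c), but (a,b,c) does not join with any tuple of r0; hence the subjoin r1 ⋈ r2 ⋈ r3 produces a dangling tuple with respect to r0 even though D is fully reduced. -/

import Mathlib

/-- A tuple `t` agrees with tuple `u` on the attribute set `S`. -/
def Agrees {α V : Type} (S : Set α) (t u : α → V) : Prop := ∀ a ∈ S, t a = u a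

/-- The output of the natural join of the relations `R i` with schemas `s i`. -/
def JoinOut {ι α V : Type} (s : ι → Set α) (R : ι → Set (α → V)) : Set (α → V) :=
  { t | ∀ i, ∃ u ∈ R i, Agrees (s i) t u }

/-- The output of the join of the subfamily of relations indexed by `K`. -/
def SubJoinOut {ι α V : Type} (s : ι → Set α) (R : ι → Set (α → V)) (K : Set ι) :
    Set (α → V) :=
  { t | ∀ i ∈ K, ∃ u ∈ R i, Agrees (s i) t u }

/-- A database is fully reduced if every tuple of every relation is the projection of
some tuple in the full join output. -/
def FullyReduced {ι α V : Type} (s : ι → Set α) (R : ι → Set (α → V)) : Prop :=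
  ∀ i, ∀ u ∈ R i, ∃ t ∈ JoinOut s R, Agrees (s i) t u


/-! The relations `r1, r2, r3` are exactly the projections of `r0`, and every tuple of `r0`
already joins with all of them, so `r0` is the full join and `D` is fully reduced. Yet the
pairwise projections of `r0` are consistent with the extra tuple `(a, b, c)`: each of its
three pairs comes from a different tuple of `r0`, while `(a, b, c)` itself is not in `r0`. -/

section Join

variable {ι α V : Type} {s : ι → Set α} {R : ι → Set (α → V)} {t u : α → V}

theorem Agrees.refl (S : Set α) (t : α → V) : Agrees S t t := fun _ _ => rfl

theorem agrees_pair_iff {i j : α} : Agrees {i, j} t u ↔ t i = u i ∧ t j = u j := by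
  simp [Agrees]

theorem agrees_univ_iff : Agrees Set.univ t u ↔ t = u := by
  simp [Agrees, funext_iff]

theorem mem_joinOut_of_forall_mem (h : ∀ i, t ∈ R i) : t ∈ JoinOut s R :=
  fun i => ⟨t, h i, Agrees.refl _ t⟩

theorem mem_subJoinOut_of_forall_mem {K : Set ι} (h : ∀ i ∈ K, t ∈ R i) :
    t ∈ SubJoinOut s R K :=
  fun i hi => ⟨t, h i hi, Agrees.refl _ t⟩

theorem fullyReduced_of_forall_exists_agrees {T : Set (α → V)} (hT : ∀ t ∈ T, ∀ i, t ∈ R i)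
    (h : ∀ i, ∀ u ∈ R i, ∃ t ∈ T, Agrees (s i) t u) : FullyReduced s R := by
  intro i u hu
  obtain ⟨t, ht, hagree⟩ := h i u hu
  exact ⟨t, mem_joinOut_of_forall_mem (hT t ht), hagree⟩

end Join

section Example

variable {V : Type} (a a1 b b1 c c1 : V)

def exampleSchema : Fin 4 → Set (Fin 3) := ![Set.univ, {0, 1}, {0, 2}, {1, 2}]

def exampleDB : Fin 4 → Set (Fin 3 → V) :=
  ![ {![a, b, c1], ![a, b1, c], ![a1, b, c]},
     {u | (u 0 = a ∧ u 1 = b) ∨ (u 0 = a ∧ u 1 = b1) ∨ (u 0 = a1 ∧ u 1 = b)},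
     {u | (u 0 = a ∧ u 2 = c) ∨ (u 0 = a ∧ u 2 = c1) ∨ (u 0 = a1 ∧ u 2 = c)},
     {u | (u 1 = b ∧ u 2 = c) ∨ (u 1 = b ∧ u 2 = c1) ∨ (u 1 = b1 ∧ u 2 = c)} ]

theorem mem_exampleDB_of_mem_zero (t : Fin 3 → V) (ht : t ∈ exampleDB a a1 b b1 c c1 0)
    (i : Fin 4) : t ∈ exampleDB a a1 b b1 c c1 i := by
  rcases ht with rfl | rfl | rfl <;> fin_cases i <;> simp [exampleDB]

theorem exists_agrees_of_mem_exampleDB (i : Fin 4) (u : Fin 3 → V)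
    (hu : u ∈ exampleDB a a1 b b1 c c1 i) :
    ∃ t ∈ exampleDB a a1 b b1 c c1 0, Agrees (exampleSchema i) t u := by
  fin_cases i
  · exact ⟨u, hu, Agrees.refl _ u⟩
  all_goals
    simp only [Fin.reduceFinMk, exampleDB, exampleSchema, Fin.isValue, Matrix.cons_val,
      Set.mem_ofPred_eq, agrees_pair_iff, Set.mem_insert_iff, Set.mem_singleton_iff,
      exists_eq_or_imp, exists_eq_left] at hu ⊢
    grind

theorem exampleDB_fullyReduced :
    FullyReduced exampleSchema (exampleDB a a1 b b1 c c1) :=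
  fullyReduced_of_forall_exists_agrees (mem_exampleDB_of_mem_zero a a1 b b1 c c1)
    (exists_agrees_of_mem_exampleDB a a1 b b1 c c1)

theorem mem_exampleDB_of_ne_zero {i : Fin 4} (hi : i ≠ 0) :
    ![a, b, c] ∈ exampleDB a a1 b b1 c c1 i := by
  fin_cases i <;> simp_all [exampleDB]

variable {a a1 b b1 c c1} in
theorem not_mem_exampleDB_zero (ha : a ≠ a1) (hb : b ≠ b1) (hc : c ≠ c1) :
    ![a, b, c] ∉ exampleDB a a1 b b1 c c1 0 := by
  simp [exampleDB, ha, hb, hc, funext_iff, Fin.forall_fin_succ]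

end Example

/-- For the database D of Example 1 (which is fully reduced), the subjoin
r1 ⋈ r2 ⋈ r3 (indices {1,2,3}) contains the tuple (a,b,c), but (a,b,c) agrees with no
tuple of r0 on their common attributes {A,B,C}: the subjoin produces a dangling tuple
with respect to r0 even though D is fully reduced. -/
theorem stmt1 {V : Type} (a a1 b b1 c c1 : V)
    (hdist : List.Pairwise (· ≠ ·) [a, a1, b, b1, c, c1])
    (s : Fin 4 → Set (Fin 3))
    (hs : s = ![Set.univ, {0, 1}, {0, 2}, {1, 2}])
    (R : Fin 4 → Set (Fin 3 → V))
    (hR : R = ![ {![a, b, c1], ![a, b1, c], ![a1, b, c]},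
                 {u | (u 0 = a ∧ u 1 = b) ∨ (u 0 = a ∧ u 1 = b1) ∨ (u 0 = a1 ∧ u 1 = b)},
                 {u | (u 0 = a ∧ u 2 = c) ∨ (u 0 = a ∧ u 2 = c1) ∨ (u 0 = a1 ∧ u 2 = c)},
                 {u | (u 1 = b ∧ u 2 = c) ∨ (u 1 = b ∧ u 2 = c1) ∨ (u 1 = b1 ∧ u 2 = c)} ]) :
    FullyReduced s R ∧
    ![a, b, c] ∈ SubJoinOut s R {1, 2, 3} ∧
    ∀ u ∈ R 0, ¬ Agrees (Set.univ : Set (Fin 3)) ![a, b, c] u := by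
  have hs : s = exampleSchema := hs
  have hR : R = exampleDB a a1 b b1 c c1 := hR
  subst hs hR
  have ha : a ≠ a1 := List.rel_of_pairwise_cons hdist (by simp)
  have hb : b ≠ b1 := List.rel_of_pairwise_cons hdist.of_cons.of_cons (by simp)
  have hc : c ≠ c1 := List.rel_of_pairwise_cons hdist.of_cons.of_cons.of_cons.of_cons (by simp)
  refine ⟨exampleDB_fullyReduced a a1 b b1 c c1,
    mem_subJoinOut_of_forall_mem fun i hi => mem_exampleDB_of_ne_zero a a1 b b1 c c1 ?_, ?_⟩
  · rintro rfl
    simp at hi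
  · rintro u hu hagree
    exact not_mem_exampleDB_zero ha hb hc (agrees_univ_iff.1 hagree ▸ hu)
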